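/- arXiv:1412.3825 — 9 statements merged into one kernel-verified Lean document; each statement's English description precedes it below -/
import Mathlib

section
/- If n > 2 and k is coprime to n, then the degree of cos(2kπ/n) over ℚ equals φ(n)/2. -/
/-!
With `ζ = exp (iθ)` a primitive `n`-th root of unity, `2 cos θ = ζ + ζ⁻¹` and `ζ` is a root of
`X ^ 2 - (ζ + ζ⁻¹) X + 1` over `ℚ(ζ + ζ⁻¹)`. For `n > 2` the root `ζ` is not real, so it does not
lie in the real field `ℚ(ζ + ζ⁻¹)`, and the tower `ℚ ⊆ ℚ(ζ + ζ⁻¹) ⊆ ℚ(ζ)` has degrees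
`φ(n) = [ℚ(cos θ) : ℚ] * 2`.
-/

open Real Polynomial IntermediateField Module

section Tower

variable {K L : Type*} [Field K] [Field L] [Algebra K L]

theorem IntermediateField.finrank_adjoin_simple_eq_mul_natDegree_minpoly {c ζ : L}
    (hζ : IsIntegral K ζ) (hc : c ∈ K⟮ζ⟯) :
    finrank K K⟮ζ⟯ = finrank K K⟮c⟯ * (minpoly K⟮c⟯ ζ).natDegree := by
  have hle : K⟮c⟯ ≤ K⟮ζ⟯ := adjoin_simple_le_iff.mpr hc
  rw [← finrank_bot_mul_relfinrank hle, relfinrank_eq_finrank_of_le hle, extendScalars_adjoin hle,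
    adjoin.finrank hζ.tower_top]

theorem natDegree_minpoly_adjoin_add_inv_eq_two {ζ : L} (hζ : ζ ∉ K⟮ζ + ζ⁻¹⟯) :
    (minpoly K⟮ζ + ζ⁻¹⟯ ζ).natDegree = 2 := by
  set F := K⟮ζ + ζ⁻¹⟯
  have hζ0 : ζ ≠ 0 := by
    rintro rfl
    exact hζ (zero_mem F)
  set p : F[X] := X ^ 2 - C ⟨ζ + ζ⁻¹, mem_adjoin_simple_self K _⟩ * X + 1
  have hp : p.Monic := by unfold p; monicity!
  have hpζ : aeval ζ p = 0 := by
    simp only [p, map_add, aeval_sub, map_pow, aeval_X, map_mul, aeval_C,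
      IntermediateField.algebraMap_apply, map_one]
    linear_combination (-1 : L) * inv_mul_cancel₀ hζ0
  have hint : IsIntegral F ζ := ⟨p, hp, hpζ⟩
  refine le_antisymm ?_ ((minpoly.two_le_natDegree_iff hint).mpr ?_)
  · calc (minpoly F ζ).natDegree ≤ p.natDegree :=
          natDegree_le_natDegree (minpoly.degree_le_of_ne_zero F ζ hp.ne_zero hpζ)
      _ = 2 := by unfold p; compute_degree!
  · rintro ⟨y, hy⟩
    exact hζ (hy ▸ y.2)

theorem natDegree_minpoly_eq_two_mul_natDegree_minpoly_add_inv {ζ : L} (hint : IsIntegral K ζ)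
    (hζ : ζ ∉ K⟮ζ + ζ⁻¹⟯) :
    (minpoly K ζ).natDegree = 2 * (minpoly K (ζ + ζ⁻¹)).natDegree := by
  have hζ_mem : ζ ∈ K⟮ζ⟯ := mem_adjoin_simple_self K ζ
  rw [← adjoin.finrank hint,
    finrank_adjoin_simple_eq_mul_natDegree_minpoly hint (add_mem hζ_mem (inv_mem hζ_mem)),
    natDegree_minpoly_adjoin_add_inv_eq_two hζ, adjoin.finrank (hint.add hint.inv), mul_comm]

theorem natDegree_minpoly_smul {r : K} (hr : r ≠ 0) (x : L) :
    (minpoly K (r • x)).natDegree = (minpoly K x).natDegree := by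
  by_cases hx : IsIntegral K x
  · rw [IsIntegrallyClosed.minpoly_smul hr hx, natDegree_scaleRoots]
  · have hrx : ¬IsIntegral K (r • x) := fun h ↦ hx (by simpa [hr] using h.smul r⁻¹)
    rw [minpoly.eq_zero hx, minpoly.eq_zero hrx]

end Tower

theorem IsPrimitiveRoot.im_ne_zero {ζ : ℂ} {n : ℕ} (h : IsPrimitiveRoot ζ n) (hn : 2 < n) :
    ζ.im ≠ 0 := by
  intro him
  have hnorm : ‖ζ‖ = 1 := Complex.norm_eq_one_of_pow_eq_one h.pow_eq_one (by omega)
  have hsq : ζ ^ 2 = 1 := by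
    rw [sq]
    nth_rewrite 2 [← Complex.conj_eq_iff_im.mpr him]
    rw [Complex.mul_conj, Complex.normSq_eq_norm_sq, hnorm]
    simp
  have := Nat.le_of_dvd two_pos (h.dvd_of_pow_eq_one 2 hsq)
  omega

theorem Complex.im_eq_zero_of_mem_adjoin_ofReal {x : ℝ} {z : ℂ} (hz : z ∈ ℚ⟮(x : ℂ)⟯) :
    z.im = 0 := by
  have hle : ℚ⟮(x : ℂ)⟯ ≤ (Complex.ofRealAm.restrictScalars ℚ).fieldRange :=
    adjoin_simple_le_iff.mpr ⟨x, rfl⟩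
  obtain ⟨r, rfl⟩ := hle hz
  exact Complex.ofReal_im r

theorem Complex.exp_mul_I_add_inv (θ : ℝ) :
    exp (θ * I) + (exp (θ * I))⁻¹ = ((2 * Real.cos θ : ℝ) : ℂ) := by
  rw [← exp_neg, ← neg_mul, ← two_cos]
  push_cast
  rfl

theorem degree_cos_two_pi_mul (n k : ℕ) (hn : 2 < n) (hk : Nat.Coprime k n) :
    (minpoly ℚ (Real.cos (2 * (k : ℝ) * π / (n : ℝ)))).natDegree = Nat.totient n / 2 := by
  set θ : ℝ := 2 * k * π / n
  set ζ := Complex.exp (θ * Complex.I)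
  have hζ : IsPrimitiveRoot ζ n := by
    convert Complex.isPrimitiveRoot_exp_of_coprime k n (by omega) hk using 2
    push_cast [θ]
    ring
  have hint : IsIntegral ℚ ζ := (hζ.isIntegral (by omega)).tower_top
  have hζ_not_mem : ζ ∉ ℚ⟮ζ + ζ⁻¹⟯ := fun h ↦
    hζ.im_ne_zero hn (Complex.im_eq_zero_of_mem_adjoin_ofReal (Complex.exp_mul_I_add_inv θ ▸ h))
  have htwo_cos : (minpoly ℚ (ζ + ζ⁻¹)).natDegree = (minpoly ℚ (cos θ)).natDegree := by
    rw [Complex.exp_mul_I_add_inv, ← Complex.coe_algebraMap,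
      minpoly.algebraMap_eq Complex.ofReal_injective, ← natDegree_minpoly_smul two_ne_zero (cos θ),
      two_smul, two_mul]
  rw [← natDegree_cyclotomic n ℚ, cyclotomic_eq_minpoly_rat hζ (by omega),
    natDegree_minpoly_eq_two_mul_natDegree_minpoly_add_inv hint hζ_not_mem, htwo_cos]
  omega
end

section
/- If a Euclidean triangle has all three angles rational multiples of π and all three side lengths rational, then it is equilateral. -/
open Real Polynomial

lemma exp_rat_pi_isIntegral (q : ℚ) (θ : ℝ) (hθ : θ = (q:ℝ)*π) :
    IsIntegral ℤ (Complex.exp (θ*Complex.I)) := by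
  refine ⟨X ^ (2*q.den) - C 1, monic_X_pow_sub_C 1 (by positivity), ?_⟩
  have hden : ((q.den : ℝ)) * q = (q.num : ℝ) := by
    have h : ((q * q.den : ℚ) : ℝ) = ((q.num : ℚ) : ℝ) := by rw [q.mul_den_eq_num]
    push_cast at h; linarith
  have hdenC : ((q.den : ℂ)) * (q:ℝ) = ((q.num:ℝ) : ℂ) := by
    exact_mod_cast congrArg Complex.ofReal hden
  simp only [eval₂_sub, eval₂_X_pow, eval₂_C, ← Complex.exp_nat_mul]
  rw [show ((2*q.den : ℕ) : ℂ) * ((θ:ℂ)*Complex.I) = (q.num : ℤ) * (2*π*Complex.I) by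
    push_cast [hθ]
    push_cast at hdenC
    rw [← hdenC]; ring]
  rw [Complex.exp_int_mul_two_pi_mul_I]
  simp

lemma niven_aux (q r : ℚ) (θ : ℝ) (hθ : θ = (q:ℝ)*π) (hr : Real.cos θ = r) :
    ∃ m : ℤ, (m : ℚ) = 2 * r := by
  have h1 := exp_rat_pi_isIntegral q θ hθ
  have h2 := exp_rat_pi_isIntegral (-q) (-θ) (by push_cast [hθ]; ring)
  have h3 : IsIntegral ℤ (Complex.exp (θ*Complex.I) + Complex.exp ((-θ)*Complex.I)) := by
    push_cast at h2 ⊢; exact h1.add h2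
  have h4 : Complex.exp (θ*Complex.I) + Complex.exp ((-θ)*Complex.I) = ((2 * r : ℚ) : ℂ) := by
    have : Complex.cos θ = ((r:ℝ):ℂ) := by rw [← Complex.ofReal_cos, hr]
    rw [Complex.cos] at this
    push_cast
    push_cast at this
    linear_combination 2 * this
  rw [h4] at h3
  have h5 : IsIntegral ℤ ((2*r : ℚ)) := by
    rwa [show ((2*r:ℚ):ℂ) = algebraMap ℚ ℂ (2*r) from rfl,
      isIntegral_algebraMap_iff (algebraMap ℚ ℂ).injective] at h3
  obtain ⟨m, hm⟩ := IsIntegrallyClosed.isIntegral_iff.mp h5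
  exact ⟨m, by exact_mod_cast hm⟩

lemma angle_cases (q r : ℚ) (θ : ℝ) (hio : θ ∈ Set.Ioo 0 π) (hθ : θ = (q:ℝ)*π)
    (hr : Real.cos θ = r) : θ = π/3 ∨ θ = π/2 ∨ θ = 2*π/3 := by
  obtain ⟨m, hm⟩ := niven_aux q r θ hθ hr
  have hm' : (m : ℝ) = 2 * Real.cos θ := by
    rw [hr]; exact_mod_cast congrArg (Rat.cast (K := ℝ)) hm
  have h1 : Real.cos θ < 1 := by
    have := Real.strictAntiOn_cos (Set.left_mem_Icc.mpr pi_pos.le)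
      ⟨hio.1.le, hio.2.le⟩ hio.1
    simpa using this
  have h2 : -1 < Real.cos θ := by
    have := Real.strictAntiOn_cos ⟨hio.1.le, hio.2.le⟩
      (Set.right_mem_Icc.mpr pi_pos.le) hio.2
    simpa using this
  have hml : (-1 : ℤ) ≤ m := by
    have h : (-2:ℤ) < m := by exact_mod_cast show (-2:ℝ) < (m:ℝ) by linarith
    omega
  have hmu : m ≤ 1 := by
    have h : m < 2 := by exact_mod_cast show (m:ℝ) < 2 by linarith
    omega
  have hpi := pi_pos
  have hmem : θ ∈ Set.Icc 0 π := ⟨hio.1.le, hio.2.le⟩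
  interval_cases m
  · right; right
    refine Real.injOn_cos hmem ⟨by linarith, by linarith⟩ ?_
    rw [show 2*π/3 = π - π/3 by ring, Real.cos_pi_sub, Real.cos_pi_div_three]
    push_cast at hm'; linarith
  · right; left
    refine Real.injOn_cos hmem ⟨by linarith, by linarith⟩ ?_
    rw [Real.cos_pi_div_two]
    push_cast at hm'; linarith
  · left
    refine Real.injOn_cos hmem ⟨by linarith, by linarith⟩ ?_
    rw [Real.cos_pi_div_three]
    push_cast at hm'; linarith

set_option maxHeartbeats 1000000 in
theorem rational_angled_rational_sided_euclidean_triangle_is_equilateral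
    (α β γ a b c : ℝ)
    (hα : α ∈ Set.Ioo 0 π) (hβ : β ∈ Set.Ioo 0 π) (hγ : γ ∈ Set.Ioo 0 π)
    (hsum : α + β + γ = π)
    (ha : 0 < a) (hb : 0 < b) (hc : 0 < c)
    (hlc1 : c ^ 2 = a ^ 2 + b ^ 2 - 2 * a * b * Real.cos γ)
    (hlc2 : a ^ 2 = b ^ 2 + c ^ 2 - 2 * b * c * Real.cos α)
    (hlc3 : b ^ 2 = c ^ 2 + a ^ 2 - 2 * c * a * Real.cos β)
    (hαQ : ∃ q : ℚ, α = (q : ℝ) * π) (hβQ : ∃ q : ℚ, β = (q : ℝ) * π)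
    (hγQ : ∃ q : ℚ, γ = (q : ℝ) * π)
    (haQ : ∃ q : ℚ, a = (q : ℝ)) (hbQ : ∃ q : ℚ, b = (q : ℝ))
    (hcQ : ∃ q : ℚ, c = (q : ℝ)) :
    a = b ∧ b = c := by
  obtain ⟨qa, rfl⟩ := haQ
  obtain ⟨qb, rfl⟩ := hbQ
  obtain ⟨qc, rfl⟩ := hcQ
  obtain ⟨q1, hq1⟩ := hαQ
  obtain ⟨q2, hq2⟩ := hβQ
  obtain ⟨q3, hq3⟩ := hγQ
  -- the cosines are rational
  have hcγ : Real.cos γ = (((qa^2+qb^2-qc^2)/(2*qa*qb) : ℚ) : ℝ) := by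
    push_cast
    rw [eq_div_iff (by positivity)]
    linear_combination hlc1
  have hcα : Real.cos α = (((qb^2+qc^2-qa^2)/(2*qb*qc) : ℚ) : ℝ) := by
    push_cast
    rw [eq_div_iff (by positivity)]
    linear_combination hlc2
  have hcβ : Real.cos β = (((qc^2+qa^2-qb^2)/(2*qc*qa) : ℚ) : ℝ) := by
    push_cast
    rw [eq_div_iff (by positivity)]
    linear_combination hlc3
  have hA := angle_cases q1 _ α hα hq1 hcα
  have hB := angle_cases q2 _ β hβ hq2 hcβ
  have hC := angle_cases q3 _ γ hγ hq3 hcγ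
  have hpi := pi_pos
  have key : α = π/3 ∧ β = π/3 ∧ γ = π/3 := by
    rcases hA with h1|h1|h1 <;> rcases hB with h2|h2|h2 <;> rcases hC with h3|h3|h3 <;>
      first
        | exact ⟨h1, h2, h3⟩
        | (exfalso; rw [h1, h2, h3] at hsum; linarith)
  obtain ⟨k1, k2, k3⟩ := key
  rw [k1, Real.cos_pi_div_three] at hlc2
  rw [k2, Real.cos_pi_div_three] at hlc3
  rw [k3, Real.cos_pi_div_three] at hlc1
  have hab : ((qa:ℝ) - qb) * (2*((qa:ℝ)+qb) - qc) = 0 := by linear_combination hlc2 - hlc3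
  have hca : ((qc:ℝ) - qa) * (2*((qc:ℝ)+qa) - qb) = 0 := by linear_combination hlc1 - hlc2
  have h1 : (qa:ℝ) = qb := by
    rcases mul_eq_zero.mp hab with h | h
    · linarith
    · exfalso; nlinarith [mul_pos ha hb, hlc1]
  have h2 : (qc:ℝ) = qa := by
    rcases mul_eq_zero.mp hca with h | h
    · linarith
    · exfalso; nlinarith [mul_pos hc ha, hlc3]
  exact ⟨h1, by linarith⟩
end

section
/- Every hyperbolic triangle whose three angles are all rational multiples of π has all three side lengths transcendental. -/
open Real

section Aux

open Polynomial

private lemma algQ_add {x y : ℂ} (hx : IsAlgebraic ℚ x) (hy : IsAlgebraic ℚ y) :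
    IsAlgebraic ℚ (x + y) := by
  rw [isAlgebraic_iff_isIntegral] at *
  exact hx.add hy

private lemma algQ_mul {x y : ℂ} (hx : IsAlgebraic ℚ x) (hy : IsAlgebraic ℚ y) :
    IsAlgebraic ℚ (x * y) := by
  rw [isAlgebraic_iff_isIntegral] at *
  exact hx.mul hy

private lemma algQ_neg {x : ℂ} (hx : IsAlgebraic ℚ x) : IsAlgebraic ℚ (-x) := by
  rw [isAlgebraic_iff_isIntegral] at *
  exact hx.neg

/-- e^(qπi) is a root of unity, hence algebraic. -/
private lemma alg_exp_rat_pi (q : ℚ) : IsAlgebraic ℚ (Complex.exp ((q : ℂ) * π * Complex.I)) := by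
  set z := Complex.exp ((q : ℂ) * π * Complex.I) with hz
  have hdpos : 0 < 2 * q.den := by have := q.den_nz; omega
  have hpow : z ^ (2 * q.den) = 1 := by
    rw [hz, ← Complex.exp_nat_mul]
    have hd : ((q.den : ℂ)) * (q : ℂ) = (q.num : ℂ) := by
      have : ((q.den : ℚ)) * q = (q.num : ℚ) := by
        rw [mul_comm, Rat.mul_den_eq_num]
      exact_mod_cast congrArg (fun r : ℚ => (r : ℂ)) this
    have : ((2 * q.den : ℕ) : ℂ) * ((q : ℂ) * π * Complex.I)
        = (q.num : ℤ) * (2 * π * Complex.I) := by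
      push_cast
      linear_combination (2 * (π : ℂ) * Complex.I) * hd
    rw [this, Complex.exp_int_mul_two_pi_mul_I]
  exact ⟨X ^ (2 * q.den) - C 1, X_pow_sub_C_ne_zero hdpos 1, by simp [hpow]⟩

private lemma alg_cos_rat_pi (q : ℚ) : IsAlgebraic ℚ ((Real.cos ((q : ℝ) * π) : ℂ)) := by
  have hz := alg_exp_rat_pi q
  set z := Complex.exp ((q : ℂ) * π * Complex.I) with hzdef
  have hcos : ((Real.cos ((q : ℝ) * π) : ℂ)) = (z + z⁻¹) * (2⁻¹ : ℚ) := by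
    rw [Complex.ofReal_cos]
    rw [Complex.cos]
    rw [hzdef, ← Complex.exp_neg]
    push_cast
    ring
  rw [hcos]
  exact algQ_mul (algQ_add hz hz.inv) (isAlgebraic_rat ℚ _)

private lemma alg_sin_rat_pi (q : ℚ) : IsAlgebraic ℚ ((Real.sin ((q : ℝ) * π) : ℂ)) := by
  have hz := alg_exp_rat_pi q
  set z := Complex.exp ((q : ℂ) * π * Complex.I) with hzdef
  have hI : IsAlgebraic ℚ (Complex.I) :=
    ⟨X ^ 2 - C (-1), X_pow_sub_C_ne_zero two_pos _, by simp⟩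
  have hsin : ((Real.sin ((q : ℝ) * π) : ℂ)) = (z⁻¹ - z) * Complex.I * (2⁻¹ : ℚ) := by
    rw [Complex.ofReal_sin]
    rw [Complex.sin]
    rw [hzdef, ← Complex.exp_neg]
    push_cast
    ring
  rw [hsin]
  exact algQ_mul (algQ_mul (algQ_add hz.inv (algQ_neg hz)) hI) (isAlgebraic_rat ℚ _)

/-- transfer complex algebraicity to real -/
private lemma alg_real_of_complex {x : ℝ} (h : IsAlgebraic ℚ ((x : ℂ))) : IsAlgebraic ℚ x := by
  have : (x : ℂ) = algebraMap ℝ ℂ x := rfl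
  rw [this] at h
  exact (isAlgebraic_algebraMap_iff (algebraMap ℝ ℂ).injective).mp h

private lemma alg_complex_of_real {x : ℝ} (h : IsAlgebraic ℚ x) : IsAlgebraic ℚ ((x : ℂ)) := by
  have : (x : ℂ) = algebraMap ℝ ℂ x := rfl
  rw [this]
  exact h.algebraMap

/-- Key step: if cosh s is algebraic and s > 0 then s is transcendental. -/
private lemma transcendental_of_alg_cosh
    (lindemann : ∀ (n : ℕ) (α c : Fin n → ℂ), Function.Injective α →
      (∀ i, IsAlgebraic ℚ (α i)) → (∀ i, IsAlgebraic ℚ (c i)) →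
      (∑ i, c i * Complex.exp (α i)) = 0 → ∀ i, c i = 0)
    {s : ℝ} (hs : 0 < s) (halg : IsAlgebraic ℚ (Real.cosh s)) : Transcendental ℚ s := by
  intro hsel
  set k : ℂ := (Real.cosh s : ℂ) with hk
  have hkalg : IsAlgebraic ℚ k := alg_complex_of_real halg
  have hsalg : IsAlgebraic ℚ ((s : ℂ)) := alg_complex_of_real hsel
  set A : Fin 3 → ℂ := ![(s : ℂ), -(s : ℂ), 0] with hA
  set C : Fin 3 → ℂ := ![1, 1, -(2 * k)] with hC
  have hinj : Function.Injective A := by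
    have h0 : (s : ℂ) ≠ 0 := Complex.ofReal_ne_zero.mpr hs.ne'
    have hne : (s : ℂ) ≠ -(s : ℂ) := by
      intro h; exact h0 (by linear_combination h / 2)
    have hn0 : -(s : ℂ) ≠ 0 := neg_ne_zero.mpr h0
    intro i j
    fin_cases i <;> fin_cases j <;> intro hij <;>
      simp only [hA, Matrix.cons_val_zero, Matrix.cons_val_one, Matrix.head_cons,
        Matrix.cons_val_two, Matrix.tail_cons] at hij <;>
      first
        | rfl
        | exact absurd hij hne
        | exact absurd hij hne.symm
        | exact absurd hij h0
        | exact absurd hij h0.symm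
        | exact absurd hij hn0
        | exact absurd hij hn0.symm
  have hAalg : ∀ i, IsAlgebraic ℚ (A i) := by
    intro i; fin_cases i
    · simpa [hA] using hsalg
    · simpa [hA] using algQ_neg hsalg
    · simpa [hA] using isAlgebraic_zero
  have hCalg : ∀ i, IsAlgebraic ℚ (C i) := by
    intro i; fin_cases i <;> simp only [hC, Matrix.cons_val_zero, Matrix.cons_val_one,
      Matrix.head_cons, Matrix.cons_val_two, Matrix.tail_cons]
    · exact isAlgebraic_one
    · exact isAlgebraic_one
    · exact algQ_neg (algQ_mul (isAlgebraic_int 2) hkalg)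
  have hsum : (∑ i, C i * Complex.exp (A i)) = 0 := by
    have hcosh : Real.cosh s = (Real.exp s + Real.exp (-s)) / 2 := Real.cosh_eq s
    have : (Real.cosh s : ℂ) = (Complex.exp s + Complex.exp (-s)) / 2 := by
      rw [hcosh]; push_cast [Complex.ofReal_exp]; ring
    simp only [Fin.sum_univ_three, hA, hC, Matrix.cons_val_zero, Matrix.cons_val_one,
      Matrix.head_cons, Matrix.cons_val_two, Matrix.tail_cons, hk]
    rw [this, Complex.exp_zero]
    ring
  have := lindemann 3 A C hinj hAalg hCalg hsum 0
  rw [hC] at this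
  simp at this

end Aux

theorem hyperbolic_triangle_rational_angles_transcendental_sides
    (lindemann : ∀ (n : ℕ) (α c : Fin n → ℂ), Function.Injective α →
      (∀ i, IsAlgebraic ℚ (α i)) → (∀ i, IsAlgebraic ℚ (c i)) →
      (∑ i, c i * Complex.exp (α i)) = 0 → ∀ i, c i = 0)
    (α β γ a b c : ℝ)
    (hα : α ∈ Set.Ioo 0 π) (hβ : β ∈ Set.Ioo 0 π) (hγ : γ ∈ Set.Ioo 0 π)
    (hsum : α + β + γ < π)
    (ha : 0 < a) (hb : 0 < b) (hc : 0 < c)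
    (hloc2c : Real.cosh c = (Real.cos α * Real.cos β + Real.cos γ) / (Real.sin α * Real.sin β))
    (hloc2a : Real.cosh a = (Real.cos β * Real.cos γ + Real.cos α) / (Real.sin β * Real.sin γ))
    (hloc2b : Real.cosh b = (Real.cos γ * Real.cos α + Real.cos β) / (Real.sin γ * Real.sin α))
    (hαQ : ∃ q : ℚ, α = (q : ℝ) * π) (hβQ : ∃ q : ℚ, β = (q : ℝ) * π)
    (hγQ : ∃ q : ℚ, γ = (q : ℝ) * π) :
    Transcendental ℚ a ∧ Transcendental ℚ b ∧ Transcendental ℚ c := by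
  obtain ⟨qα, hqα⟩ := hαQ
  obtain ⟨qβ, hqβ⟩ := hβQ
  obtain ⟨qγ, hqγ⟩ := hγQ
  have hcosα : IsAlgebraic ℚ ((Real.cos α : ℂ)) := hqα ▸ alg_cos_rat_pi qα
  have hcosβ : IsAlgebraic ℚ ((Real.cos β : ℂ)) := hqβ ▸ alg_cos_rat_pi qβ
  have hcosγ : IsAlgebraic ℚ ((Real.cos γ : ℂ)) := hqγ ▸ alg_cos_rat_pi qγ
  have hsinα : IsAlgebraic ℚ ((Real.sin α : ℂ)) := hqα ▸ alg_sin_rat_pi qα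
  have hsinβ : IsAlgebraic ℚ ((Real.sin β : ℂ)) := hqβ ▸ alg_sin_rat_pi qβ
  have hsinγ : IsAlgebraic ℚ ((Real.sin γ : ℂ)) := hqγ ▸ alg_sin_rat_pi qγ
  have key : ∀ x y z : ℝ, x ∈ Set.Ioo 0 π → y ∈ Set.Ioo 0 π →
      IsAlgebraic ℚ ((Real.cos x : ℂ)) → IsAlgebraic ℚ ((Real.cos y : ℂ)) →
      IsAlgebraic ℚ ((Real.cos z : ℂ)) →
      IsAlgebraic ℚ ((Real.sin x : ℂ)) → IsAlgebraic ℚ ((Real.sin y : ℂ)) →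
      IsAlgebraic ℚ ((Real.cos x * Real.cos y + Real.cos z) / (Real.sin x * Real.sin y)) := by
    intro x y z hx hy hcx hcy hcz hsx hsy
    have hsx0 : Real.sin x ≠ 0 := ne_of_gt (Real.sin_pos_of_pos_of_lt_pi hx.1 hx.2)
    have hsy0 : Real.sin y ≠ 0 := ne_of_gt (Real.sin_pos_of_pos_of_lt_pi hy.1 hy.2)
    apply alg_real_of_complex
    have : (((Real.cos x * Real.cos y + Real.cos z) / (Real.sin x * Real.sin y) : ℝ) : ℂ)
        = ((Real.cos x : ℂ) * Real.cos y + Real.cos z) *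
          (((Real.sin x : ℂ)) * ((Real.sin y : ℂ)))⁻¹ := by
      push_cast
      rw [div_eq_mul_inv]
    rw [this]
    exact algQ_mul (algQ_add (algQ_mul hcx hcy) hcz)
      ((algQ_mul hsx hsy).inv)
  refine ⟨?_, ?_, ?_⟩
  · exact transcendental_of_alg_cosh lindemann ha
      (hloc2a ▸ key β γ α hβ hγ hcosβ hcosγ hcosα hsinβ hsinγ)
  · exact transcendental_of_alg_cosh lindemann hb
      (hloc2b ▸ key γ α β hγ hα hcosγ hcosα hcosβ hsinγ hsinα)
  · exact transcendental_of_alg_cosh lindemann hc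
      (hloc2c ▸ key α β γ hα hβ hcosα hcosβ hcosγ hsinα hsinβ)
end

section
/- There does not exist a hyperbolic triangle with angles α, β, γ and side lengths a, b, c (with c opposite γ) such that γ ∈ ℚπ, α + β ∈ ℚπ, and both a and b are algebraic. -/
open Real

/-!
The laws of cosines and sines give `(cos γ + cos (α + β)) (cosh c + 1) = sin² γ sinh a sinh b`.
Eliminating `cosh c` by the law of cosines for `γ` turns this into
`cosh a cosh b + 1 = T sinh a sinh b` with `T = cos γ + sin² γ / (cos γ + cos (α + β))`, which is
algebraic since `γ` and `α + β` are rational multiples of `π`. Written out in exponentials this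
is a linear relation with algebraic coefficients among `e^(±a ± b)` and `e^0` in which `e^(a + b)`
occurs once, with coefficient `1 - T`. Lindemann–Weierstrass forces `T = 1`, and then the relation
reads `cosh (a - b) + 1 = 0`.
-/

section HyperbolicTriangle

variable {α β γ a b c : ℝ}

theorem cos_add_cos_add_mul_cosh_add_one (hc : c ≠ 0) (hab : sinh a * sinh b ≠ 0)
    (hγ : cos γ * (sinh a * sinh b) = cosh a * cosh b - cosh c)
    (hα : cos α * (sinh b * sinh c) = cosh b * cosh c - cosh a)
    (hβ : cos β * (sinh c * sinh a) = cosh c * cosh a - cosh b)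
    (hsa : sinh a * sin γ = sinh c * sin α) (hsb : sinh b * sin γ = sinh c * sin β) :
    (cos γ + cos (α + β)) * (cosh c + 1) = sin γ ^ 2 * (sinh a * sinh b) := by
  -- `sin² γ sinh² a sinh² b` is the symmetric expression `Δ` in `cosh a, cosh b, cosh c`
  set Δ := 1 - cosh a ^ 2 - cosh b ^ 2 - cosh c ^ 2 + 2 * cosh a * cosh b * cosh c
  have hsinγ_sq : sin γ ^ 2 * (sinh a * sinh b) ^ 2 = Δ := by
    linear_combination (sinh a * sinh b) ^ 2 * sin_sq_add_cos_sq γ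
      - (cos γ * (sinh a * sinh b) + cosh a * cosh b - cosh c) * hγ
      + sinh b ^ 2 * sinh_sq a + (cosh a ^ 2 - 1) * sinh_sq b
  have hsin : sin α * sin β * (sinh a * sinh b * sinh c ^ 2) = Δ := by
    linear_combination hsinγ_sq - sinh a * sinh b * sinh c * sin β * hsa
      - sinh a * sinh b * sinh a * sin γ * hsb
  have hcos : cos α * cos β * (sinh a * sinh b * sinh c ^ 2)
      = (cosh b * cosh c - cosh a) * (cosh c * cosh a - cosh b) := by
    linear_combination cos β * (sinh c * sinh a) * hα + (cosh b * cosh c - cosh a) * hβ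
  have hsum : (cos γ + cos (α + β)) * (sinh a * sinh b * sinh c ^ 2) = Δ * (cosh c - 1) := by
    rw [cos_add]
    linear_combination sinh c ^ 2 * hγ + hcos - hsin + (cosh a * cosh b - cosh c) * sinh_sq c
  have hc1 : sinh a * sinh b * (cosh c - 1) ≠ 0 :=
    mul_ne_zero hab (sub_ne_zero.mpr (one_lt_cosh.mpr hc).ne')
  refine mul_left_cancel₀ hc1 ?_
  linear_combination hsum - (cosh c - 1) * hsinγ_sq
    - (cos γ + cos (α + β)) * (sinh a * sinh b) * sinh_sq c

theorem cosh_mul_cosh_add_one_eq (hc : c ≠ 0) (hab : sinh a * sinh b ≠ 0) (hsγ : sin γ ≠ 0)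
    (hγ : cos γ * (sinh a * sinh b) = cosh a * cosh b - cosh c)
    (hα : cos α * (sinh b * sinh c) = cosh b * cosh c - cosh a)
    (hβ : cos β * (sinh c * sinh a) = cosh c * cosh a - cosh b)
    (hsa : sinh a * sin γ = sinh c * sin α) (hsb : sinh b * sin γ = sinh c * sin β) :
    cosh a * cosh b + 1 = (cos γ + sin γ ^ 2 / (cos γ + cos (α + β))) * (sinh a * sinh b) := by
  have key := cos_add_cos_add_mul_cosh_add_one hc hab hγ hα hβ hsa hsb
  have hK : cos γ + cos (α + β) ≠ 0 := by
    rintro hK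
    rw [hK, zero_mul, eq_comm] at key
    exact mul_ne_zero (pow_ne_zero 2 hsγ) hab key
  field_simp
  linear_combination key - (cos γ + cos (α + β)) * hγ

end HyperbolicTriangle

def LindemannWeierstrass : Prop :=
  ∀ (n : ℕ) (α c : Fin n → ℂ), Function.Injective α →
    (∀ i, IsAlgebraic ℚ (α i)) → (∀ i, IsAlgebraic ℚ (c i)) →
    (∑ i, c i * Complex.exp (α i)) = 0 → ∀ i, c i = 0

namespace LindemannWeierstrass

theorem coeff_eq_zero (hLW : LindemannWeierstrass) {ι : Type*} [Fintype ι] {α c : ι → ℝ}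
    (hα : ∀ i, IsAlgebraic ℚ (α i)) (hc : ∀ i, IsAlgebraic ℚ (c i))
    (h : ∑ i, c i * rexp (α i) = 0) {i₀ : ι} (hi₀ : ∀ j, α j = α i₀ → j = i₀) : c i₀ = 0 := by
  classical
  set S := Finset.univ.image α
  -- equal exponents are merged: `d x` is the total coefficient of `exp x`
  set d : ℝ → ℝ := fun x ↦ ∑ i with α i = x, c i
  have hd : ∑ x ∈ S, d x * rexp x = 0 := by
    rw [← h, ← Finset.sum_fiberwise_of_maps_to (g := α) (t := S) (by simp [S])]
    refine Finset.sum_congr rfl fun x _ ↦ ?_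
    rw [Finset.sum_mul]
    exact Finset.sum_congr rfl fun i hi ↦ by rw [(Finset.mem_filter.mp hi).2]
  have hdalg (x : ℝ) : IsAlgebraic ℚ (d x) :=
    Finset.sum_induction _ (IsAlgebraic ℚ) (fun _ _ ↦ IsAlgebraic.add) isAlgebraic_zero
      fun i _ ↦ hc i
  have toComplex {x : ℝ} (hx : IsAlgebraic ℚ x) : IsAlgebraic ℚ (x : ℂ) :=
    (isAlgebraic_algebraMap_iff (A := ℂ) RCLike.ofReal_injective).mpr hx
  have hSalg : ∀ x ∈ S, IsAlgebraic ℚ x := by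
    simp only [S, Finset.mem_image, Finset.mem_univ, true_and]
    rintro _ ⟨i, rfl⟩
    exact hα i
  set e := S.equivFin.symm
  have hvanish := hLW S.card (fun k ↦ ((e k : ℝ) : ℂ)) (fun k ↦ (d (e k) : ℂ))
    (fun k l hkl ↦ e.injective (Subtype.ext (Complex.ofReal_injective hkl)))
    (fun k ↦ toComplex (hSalg _ (e k).2)) (fun k ↦ toComplex (hdalg _)) (by
      rw [← Complex.ofReal_zero, ← hd, ← Finset.sum_coe_sort S, ← e.sum_comp]
      push_cast [Complex.ofReal_exp]
      rfl)
  have hfiber : d (α i₀) = c i₀ := by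
    refine Finset.sum_eq_single_of_mem _ (by simp) fun j hj hji ↦ ?_
    exact absurd (hi₀ j (Finset.mem_filter.mp hj).2) hji
  rw [← hfiber]
  simpa using hvanish (e.symm ⟨α i₀, by simp [S]⟩)

theorem cosh_mul_cosh_add_one_ne (hLW : LindemannWeierstrass) {a b T : ℝ} (ha : 0 < a)
    (hb : 0 < b) (haA : IsAlgebraic ℚ a) (hbA : IsAlgebraic ℚ b) (hT : IsAlgebraic ℚ T) :
    cosh a * cosh b + 1 ≠ T * (sinh a * sinh b) := by
  intro h
  have hT1 : T ≠ 1 := by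
    rintro rfl
    linarith [cosh_sub a b, one_le_cosh (a - b)]
  have h4 : IsAlgebraic ℚ (4 : ℝ) := by exact_mod_cast isAlgebraic_natCast (R := ℚ) (A := ℝ) 4
  have hsum : ∑ i, ![1 - T, 1 + T, 1 + T, 1 - T, 4] i *
      rexp (![a + b, a + -b, -a + b, -a + -b, 0] i) = 0 := by
    simp only [Fin.sum_univ_five, Matrix.cons_val_zero, Matrix.cons_val_one, Matrix.cons_val_two,
      Matrix.cons_val_three, Matrix.cons_val_four, Matrix.head_cons, Matrix.tail_cons, exp_add,
      exp_zero]
    rw [cosh_eq, cosh_eq, sinh_eq, sinh_eq] at h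
    linear_combination 4 * h
  refine hT1 (sub_eq_zero.mp (hLW.coeff_eq_zero (i₀ := 0) ?_ ?_ hsum ?_)).symm
  · intro i
    fin_cases i
    exacts [haA.add hbA, haA.add hbA.neg, haA.neg.add hbA, haA.neg.add hbA.neg, isAlgebraic_zero]
  · intro i
    fin_cases i
    exacts [isAlgebraic_one.sub hT, isAlgebraic_one.add hT, isAlgebraic_one.add hT,
      isAlgebraic_one.sub hT, h4]
  · intro j hj
    fin_cases j <;> simp at hj ⊢ <;> linarith

end LindemannWeierstrass

theorem no_hyperbolic_triangle_with_algebraic_legs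
    (lindemann : ∀ (n : ℕ) (α c : Fin n → ℂ), Function.Injective α →
      (∀ i, IsAlgebraic ℚ (α i)) → (∀ i, IsAlgebraic ℚ (c i)) →
      (∑ i, c i * Complex.exp (α i)) = 0 → ∀ i, c i = 0) :
    ¬ ∃ α β γ a b c : ℝ,
      α ∈ Set.Ioo 0 π ∧ β ∈ Set.Ioo 0 π ∧ γ ∈ Set.Ioo 0 π ∧
      0 < a ∧ 0 < b ∧ 0 < c ∧
      Real.cos γ = (Real.cosh a * Real.cosh b - Real.cosh c) / (Real.sinh a * Real.sinh b) ∧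
      Real.cos α = (Real.cosh b * Real.cosh c - Real.cosh a) / (Real.sinh b * Real.sinh c) ∧
      Real.cos β = (Real.cosh c * Real.cosh a - Real.cosh b) / (Real.sinh c * Real.sinh a) ∧
      Real.sinh a / Real.sin α = Real.sinh b / Real.sin β ∧
      Real.sinh b / Real.sin β = Real.sinh c / Real.sin γ ∧
      (∃ q : ℚ, γ = (q : ℝ) * π) ∧ (∃ q : ℚ, α + β = (q : ℝ) * π) ∧
      IsAlgebraic ℚ a ∧ IsAlgebraic ℚ b := by
  rintro ⟨α, β, γ, a, b, c, ⟨hα₀, hαπ⟩, ⟨hβ₀, hβπ⟩, ⟨hγ₀, hγπ⟩, ha, hb, hc, hγ, hα, hβ,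
    hsab, hsbc, ⟨q, rfl⟩, ⟨r, hr⟩, haA, hbA⟩
  have hsα := (sin_pos_of_pos_of_lt_pi hα₀ hαπ).ne'
  have hsβ := (sin_pos_of_pos_of_lt_pi hβ₀ hβπ).ne'
  have hsγ := (sin_pos_of_pos_of_lt_pi hγ₀ hγπ).ne'
  have hsinh {x : ℝ} (hx : 0 < x) : sinh x ≠ 0 := (sinh_pos_iff.mpr hx).ne'
  have hcosh := cosh_mul_cosh_add_one_eq hc.ne' (mul_ne_zero (hsinh ha) (hsinh hb)) hsγ
    ((eq_div_iff (mul_ne_zero (hsinh ha) (hsinh hb))).mp hγ)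
    ((eq_div_iff (mul_ne_zero (hsinh hb) (hsinh hc))).mp hα)
    ((eq_div_iff (mul_ne_zero (hsinh hc) (hsinh ha))).mp hβ)
    ((div_eq_div_iff hsα hsγ).mp (hsab.trans hsbc)) ((div_eq_div_iff hsβ hsγ).mp hsbc)
  have hrat {x : ℝ} (hx : IsAlgebraic ℤ x) : IsAlgebraic ℚ x :=
    hx.extendScalars (algebraMap ℤ ℚ).injective_int
  have hcosγ := hrat (isAlgebraic_cos_rat_mul_pi q)
  refine LindemannWeierstrass.cosh_mul_cosh_add_one_ne lindemann ha hb haA hbA ?_ hcosh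
  rw [hr, div_eq_mul_inv]
  exact hcosγ.add (((hrat (isAlgebraic_sin_rat_mul_pi q)).pow 2).mul
    (hcosγ.add (hrat (isAlgebraic_cos_rat_mul_pi r))).inv)
end

section
/- Every regular rational angled hyperbolic polygon has transcendental side length, circumradius, and apothem. -/
open Real

section helpers

variable {A : Type*} [Field A] [Algebra ℚ A]

lemma AlgQ.add' {a b : A} (ha : IsAlgebraic ℚ a) (hb : IsAlgebraic ℚ b) :
    IsAlgebraic ℚ (a + b) :=
  isAlgebraic_iff_isIntegral.mpr
    ((isAlgebraic_iff_isIntegral.mp ha).add (isAlgebraic_iff_isIntegral.mp hb))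

lemma AlgQ.mul' {a b : A} (ha : IsAlgebraic ℚ a) (hb : IsAlgebraic ℚ b) :
    IsAlgebraic ℚ (a * b) :=
  isAlgebraic_iff_isIntegral.mpr
    ((isAlgebraic_iff_isIntegral.mp ha).mul (isAlgebraic_iff_isIntegral.mp hb))

lemma AlgQ.neg' {a : A} (ha : IsAlgebraic ℚ a) : IsAlgebraic ℚ (-a) :=
  isAlgebraic_iff_isIntegral.mpr (isAlgebraic_iff_isIntegral.mp ha).neg

lemma AlgQ.div' {a b : A} (ha : IsAlgebraic ℚ a) (hb : IsAlgebraic ℚ b) :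
    IsAlgebraic ℚ (a / b) := by
  rw [div_eq_mul_inv]; exact AlgQ.mul' ha hb.inv

lemma AlgQ.ratCast' (q : ℚ) : IsAlgebraic ℚ ((q : A)) := by
  have := isAlgebraic_algebraMap (A := A) q
  rwa [show (algebraMap ℚ A) q = (q : A) from map_ratCast _ q] at this

end helpers

/-- `exp (q π i)` is a root of unity, hence algebraic. -/
lemma algExpUnit (q : ℚ) : IsAlgebraic ℚ (Complex.exp ((q : ℂ) * (π : ℝ) * Complex.I)) := by
  set z := Complex.exp ((q : ℂ) * (π : ℝ) * Complex.I) with hz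
  have hpow : z ^ (2 * q.den) = 1 := by
    rw [hz, ← Complex.exp_nat_mul]
    have harg : ((2 * q.den : ℕ) : ℂ) * ((q : ℂ) * (π : ℝ) * Complex.I)
        = (q.num : ℤ) * (2 * (π : ℝ) * Complex.I) := by
      have hd : ((q.den : ℚ)) ≠ 0 := by exact_mod_cast q.den_ne_zero
      have hqQ : ((q.den : ℚ)) * q = (q.num : ℚ) := by
        have h := Rat.num_div_den q
        rw [div_eq_iff hd] at h
        linear_combination -h
      have hq : ((q.den : ℚ) : ℂ) * (q : ℂ) = ((q.num : ℚ) : ℂ) := by exact_mod_cast hqQ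
      push_cast at hq ⊢
      linear_combination (2 * (π : ℝ) * Complex.I) * hq
    rw [harg]
    exact Complex.exp_int_mul_two_pi_mul_I q.num
  refine ⟨Polynomial.X ^ (2 * q.den) - Polynomial.C 1, ?_, ?_⟩
  · exact (Polynomial.monic_X_pow_sub_C (1 : ℚ)
      (by positivity)).ne_zero
  · simp [hpow]

lemma algCosQ (q : ℚ) : IsAlgebraic ℚ (Complex.cos ((q : ℂ) * (π : ℝ))) := by
  have hz := algExpUnit q
  have hzn := algExpUnit (-q)
  have h2 : Complex.cos ((q : ℂ) * (π : ℝ)) =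
      (Complex.exp ((q : ℂ) * (π : ℝ) * Complex.I)
        + Complex.exp (((-q : ℚ) : ℂ) * (π : ℝ) * Complex.I)) / 2 := by
    rw [eq_div_iff (two_ne_zero), mul_comm, Complex.two_cos]
    push_cast
    ring_nf
  rw [h2]
  exact AlgQ.div' (AlgQ.add' hz hzn) (AlgQ.ratCast' 2)

lemma algI : IsAlgebraic ℚ (Complex.I) := by
  refine ⟨Polynomial.X ^ 2 + Polynomial.C 1, ?_, ?_⟩
  · exact (Polynomial.monic_X_pow_add_C (1 : ℚ) two_ne_zero).ne_zero
  · simp [Complex.I_sq]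

lemma algSinQ (q : ℚ) : IsAlgebraic ℚ (Complex.sin ((q : ℂ) * (π : ℝ))) := by
  have hz := algExpUnit q
  have hzn := algExpUnit (-q)
  have h2 : Complex.sin ((q : ℂ) * (π : ℝ)) =
      (Complex.exp (((-q : ℚ) : ℂ) * (π : ℝ) * Complex.I)
        - Complex.exp ((q : ℂ) * (π : ℝ) * Complex.I)) * Complex.I / 2 := by
    rw [eq_div_iff (two_ne_zero), mul_comm _ (2 : ℂ), Complex.two_sin]
    push_cast
    ring_nf
  rw [h2]
  exact AlgQ.div' (AlgQ.mul' (by rw [sub_eq_add_neg]; exact AlgQ.add' hzn (AlgQ.neg' hz)) algI)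
    (AlgQ.ratCast' 2)

/-- Key Lindemann consequence: a nonzero real with algebraic `cosh` is transcendental. -/
lemma transcendental_of_cosh_algebraic
    (lindemann : ∀ (n : ℕ) (α c : Fin n → ℂ), Function.Injective α →
      (∀ i, IsAlgebraic ℚ (α i)) → (∀ i, IsAlgebraic ℚ (c i)) →
      (∑ i, c i * Complex.exp (α i)) = 0 → ∀ i, c i = 0)
    (x : ℝ) (hx : x ≠ 0) (hcosh : IsAlgebraic ℚ ((Real.cosh x : ℝ) : ℂ)) :
    Transcendental ℚ x := by
  intro halg
  have hxC : IsAlgebraic ℚ ((x : ℝ) : ℂ) := by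
    have := halg.algebraMap (A := ℂ)
    rwa [show (algebraMap ℝ ℂ) x = (x : ℂ) from rfl] at this
  have hx0 : (x : ℂ) ≠ 0 := by exact_mod_cast hx
  set α : Fin 3 → ℂ := ![(x : ℂ), -(x : ℂ), 0] with hα
  set c : Fin 3 → ℂ := ![1, 1, -(2 * ((Real.cosh x : ℝ) : ℂ))] with hc
  have hinj : Function.Injective α := by
    have hxx : (x : ℂ) ≠ -(x : ℂ) := by
      intro h
      apply hx0
      have : (2 : ℂ) * x = 0 := by linear_combination h
      simpa using (mul_eq_zero.mp this).resolve_left two_ne_zero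
    have hnx0 : -(x : ℂ) ≠ 0 := neg_ne_zero.mpr hx0
    intro i j hij
    fin_cases i <;> fin_cases j <;> simp only [hα, Matrix.cons_val_zero,
      Matrix.cons_val_one, Matrix.head_cons, Matrix.cons_val_two, Matrix.tail_cons,
      Fin.mk_zero, Fin.mk_one] at hij <;>
      first
        | rfl
        | exact absurd hij hxx
        | exact absurd hij.symm hxx
        | exact absurd hij hx0
        | exact absurd hij.symm hx0
        | exact absurd hij hnx0
        | exact absurd hij.symm hnx0
  have halgα : ∀ i, IsAlgebraic ℚ (α i) := by
    intro i
    fin_cases i <;> simp [hα]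
    · exact hxC
    · exact AlgQ.neg' hxC
    · exact isAlgebraic_zero
  have halgc : ∀ i, IsAlgebraic ℚ (c i) := by
    intro i
    fin_cases i <;> simp [hc]
    · exact isAlgebraic_one
    · exact isAlgebraic_one
    · exact AlgQ.neg' (AlgQ.mul' (AlgQ.ratCast' 2) (by rwa [Complex.ofReal_cosh] at hcosh))
  have hsum : (∑ i, c i * Complex.exp (α i)) = 0 := by
    have hch : ((Real.cosh x : ℝ) : ℂ) = Complex.cosh (x : ℂ) := Complex.ofReal_cosh x
    have h2 : (2 : ℂ) * Complex.cosh (x : ℂ)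
        = Complex.exp (x : ℂ) + Complex.exp (-(x : ℂ)) := Complex.two_cosh _
    simp only [Fin.sum_univ_three, hα, hc, Matrix.cons_val_zero, Matrix.cons_val_one,
      Matrix.head_cons, Matrix.cons_val_two, Matrix.tail_cons, Complex.exp_zero, hch]
    linear_combination (-1 : ℂ) * h2
  have := lindemann 3 α c hinj halgα halgc hsum 0
  simp [hc] at this

/-- A regular hyperbolic n-gon with rational interior angle θ has transcendental
side length `s`, circumradius `r`, and apothem `ap`: it decomposes into right
triangles with angles θ/2, π/n, π/2, legs `s/2`, `ap` and hypotenuse `r`,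
satisfying the second hyperbolic law of cosines. -/
theorem regular_rational_angled_hyperbolic_polygon
    (lindemann : ∀ (n : ℕ) (α c : Fin n → ℂ), Function.Injective α →
      (∀ i, IsAlgebraic ℚ (α i)) → (∀ i, IsAlgebraic ℚ (c i)) →
      (∑ i, c i * Complex.exp (α i)) = 0 → ∀ i, c i = 0)
    (n : ℕ) (hn : 3 ≤ n) (θ s r ap : ℝ)
    (hθQ : ∃ q : ℚ, θ = (q : ℝ) * π)
    (hθpos : 0 < θ) (hθlt : θ < ((n : ℝ) - 2) * π / (n : ℝ))
    (hs : 0 < s) (hr : 0 < r) (hap : 0 < ap)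
    (hhyp : Real.cosh r =
      (Real.cos (θ / 2) * Real.cos (π / (n : ℝ)) + Real.cos (π / 2)) /
        (Real.sin (θ / 2) * Real.sin (π / (n : ℝ))))
    (hhalfside : Real.cosh (s / 2) =
      (Real.cos (θ / 2) * Real.cos (π / 2) + Real.cos (π / (n : ℝ))) /
        (Real.sin (θ / 2) * Real.sin (π / 2)))
    (hapothem : Real.cosh ap =
      (Real.cos (π / (n : ℝ)) * Real.cos (π / 2) + Real.cos (θ / 2)) /
        (Real.sin (π / (n : ℝ)) * Real.sin (π / 2))) :
    Transcendental ℚ s ∧ Transcendental ℚ r ∧ Transcendental ℚ ap := by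
  obtain ⟨q, hθ⟩ := hθQ
  have hn0 : (n : ℝ) ≠ 0 := by positivity
  have key : ∀ (x A B C : ℝ) (a b c : ℚ), A = (a : ℝ) * π → B = (b : ℝ) * π →
      C = (c : ℝ) * π →
      Real.cosh x = (Real.cos A * Real.cos B + Real.cos C) / (Real.sin A * Real.sin B) →
      x ≠ 0 → Transcendental ℚ x := by
    intro x A B C a b c hA hB hC heq hx
    apply transcendental_of_cosh_algebraic lindemann x hx
    have hcast : ((Real.cosh x : ℝ) : ℂ) =
        (Complex.cos ((a : ℂ) * (π : ℝ)) * Complex.cos ((b : ℂ) * (π : ℝ))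
          + Complex.cos ((c : ℂ) * (π : ℝ))) /
        (Complex.sin ((a : ℂ) * (π : ℝ)) * Complex.sin ((b : ℂ) * (π : ℝ))) := by
      rw [heq, hA, hB, hC]
      push_cast
      norm_num
    rw [hcast]
    exact AlgQ.div' (AlgQ.add' (AlgQ.mul' (algCosQ a) (algCosQ b)) (algCosQ c))
      (AlgQ.mul' (algSinQ a) (algSinQ b))
  have hhalf : θ / 2 = ((q / 2 : ℚ) : ℝ) * π := by rw [hθ]; push_cast; ring
  have hpin : π / (n : ℝ) = (((1 : ℚ) / n : ℚ) : ℝ) * π := by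
    push_cast
    field_simp
  have hpi2 : π / 2 = (((1 : ℚ) / 2 : ℚ) : ℝ) * π := by push_cast; ring
  have hts2 : Transcendental ℚ (s / 2) :=
    key (s / 2) (θ / 2) (π / 2) (π / (n : ℝ)) (q / 2) (1 / 2) (1 / n)
      hhalf hpi2 hpin hhalfside (by positivity)
  refine ⟨?_, ?_, ?_⟩
  · intro h
    apply hts2
    have := AlgQ.mul' h (AlgQ.ratCast' (A := ℝ) (1 / 2))
    have h2 : s / 2 = s * (((1 : ℚ) / 2 : ℚ) : ℝ) := by push_cast; ring
    rwa [h2]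
  · exact key r (θ / 2) (π / (n : ℝ)) (π / 2) (q / 2) (1 / n) (1 / 2)
      hhalf hpin hpi2 hhyp (by positivity)
  · exact key ap (π / (n : ℝ)) (π / 2) (θ / 2) (1 / n) (1 / 2) (q / 2)
      hpin hpi2 hhalf hapothem (by positivity)
end

section
/- If c > 0 and α, β ∈ ℚπ with sin α sin β ≠ 0 satisfy cosh c = (1 + cos α cos β)/(sin α sin β), then c is transcendental. -/
/-! Cosines and sines of rational multiples of `π` are algebraic, so the relation makes `cosh c`
algebraic. If `c` were algebraic too, `e^c + e^{-c} - 2 cosh c · e^0 = 0` would be a nontrivial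
linear relation with algebraic coefficients among the exponentials of the distinct algebraic
numbers `c, -c, 0`, contradicting Lindemann's theorem. -/

open Real

theorem Complex.transcendental_cosh_of_isAlgebraic (hLW : LindemannWeierstrass) {c : ℂ}
    (hc₀ : c ≠ 0) (hc : IsAlgebraic ℚ c) : Transcendental ℚ (Complex.cosh c) := by
  intro hcosh
  have hinj : Function.Injective ![c, -c, 0] := by
    have : c ≠ -c := fun h => hc₀ (CharZero.eq_neg_self_iff.mp h)
    intro i j hij
    fin_cases i <;> fin_cases j <;> simp_all [eq_comm]
  have hrel : ∑ i, ![1, 1, -(2 * Complex.cosh c)] i * Complex.exp (![c, -c, 0] i) = 0 := by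
    simp only [Fin.sum_univ_three, Complex.cosh, Matrix.cons_val_zero, Matrix.cons_val_one,
      Matrix.cons_val, one_mul, Complex.exp_zero, mul_one]
    ring
  have hcoeff : ∀ i, IsAlgebraic ℚ (![1, 1, -(2 * Complex.cosh c)] i) := by
    intro i
    fin_cases i
    · exact isAlgebraic_one
    · exact isAlgebraic_one
    · exact ((isAlgebraic_natCast 2).mul hcosh).neg
  have hexp : ∀ i, IsAlgebraic ℚ (![c, -c, 0] i) := by
    intro i
    fin_cases i
    · exact hc
    · exact hc.neg
    · exact isAlgebraic_zero
  simpa using hLW 3 _ _ hinj hexp hcoeff hrel 0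

theorem Real.transcendental_cosh_of_isAlgebraic (hLW : LindemannWeierstrass) {c : ℝ}
    (hc₀ : c ≠ 0) (hc : IsAlgebraic ℚ c) : Transcendental ℚ (Real.cosh c) := by
  have := Complex.transcendental_cosh_of_isAlgebraic hLW (Complex.ofReal_ne_zero.mpr hc₀)
    (hc.algHom (Complex.ofRealAm.restrictScalars ℚ))
  rw [← Complex.ofReal_cosh] at this
  exact (transcendental_algebraMap_iff Complex.ofReal_injective).mp this

theorem isAlgebraic_one_add_cos_mul_cos_div_sin_mul_sin (p q : ℚ) :
    IsAlgebraic ℤ ((1 + cos (p * π) * cos (q * π)) / (sin (p * π) * sin (q * π))) := by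
  rw [div_eq_mul_inv]
  have hcos := (isAlgebraic_cos_rat_mul_pi p).mul (isAlgebraic_cos_rat_mul_pi q)
  have hsin := (isAlgebraic_sin_rat_mul_pi p).mul (isAlgebraic_sin_rat_mul_pi q)
  exact (isAlgebraic_one.add hcos).mul hsin.inv

theorem transcendental_of_ideal_relation_general
    (lindemann : ∀ (n : ℕ) (α c : Fin n → ℂ), Function.Injective α →
      (∀ i, IsAlgebraic ℚ (α i)) → (∀ i, IsAlgebraic ℚ (c i)) →
      (∑ i, c i * Complex.exp (α i)) = 0 → ∀ i, c i = 0)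
    (α β c : ℝ) (hc : 0 < c)
    (hαQ : ∃ q : ℚ, α = (q : ℝ) * π) (hβQ : ∃ q : ℚ, β = (q : ℝ) * π)
    (hrel : Real.cosh c = (1 + Real.cos α * Real.cos β) / (Real.sin α * Real.sin β)) :
    Transcendental ℚ c := by
  obtain ⟨p, rfl⟩ := hαQ
  obtain ⟨q, rfl⟩ := hβQ
  have hcosh : IsAlgebraic ℚ (cosh c) := by
    rw [hrel]
    exact (isAlgebraic_one_add_cos_mul_cos_div_sin_mul_sin p q).extendScalars Int.cast_injective
  exact fun hcAlg => Real.transcendental_cosh_of_isAlgebraic lindemann hc.ne' hcAlg hcosh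

theorem transcendental_of_ideal_relation
    (lindemann : ∀ (n : ℕ) (α c : Fin n → ℂ), Function.Injective α →
      (∀ i, IsAlgebraic ℚ (α i)) → (∀ i, IsAlgebraic ℚ (c i)) →
      (∑ i, c i * Complex.exp (α i)) = 0 → ∀ i, c i = 0)
    (α β c : ℝ) (hc : 0 < c)
    (hαQ : ∃ q : ℚ, α = (q : ℝ) * π) (hβQ : ∃ q : ℚ, β = (q : ℝ) * π)
    (hsin : Real.sin α * Real.sin β ≠ 0)
    (hrel : Real.cosh c = (1 + Real.cos α * Real.cos β) / (Real.sin α * Real.sin β)) :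
    Transcendental ℚ c :=
  transcendental_of_ideal_relation_general lindemann α β c hc hαQ hβQ hrel
end

section
/- If c is a positive real number and α, β, γ ∈ ℚπ with sin α sin β ≠ 0 satisfy cos c = (cos α cos β + cos γ)/(sin α sin β), then c is transcendental. -/
/-!
If `c ≠ 0` is algebraic, then `ic`, `-ic` and `0` are distinct algebraic numbers, so by Lindemann's
theorem the relation `e^{ic} + e^{-ic} - 2 cos c · e^0 = 0` forces `cos c` to be transcendental.
But `cos` and `sin` of rational multiples of `π` are algebraic, so the hypothesis makes `cos c`
algebraic.
-/

open Real

def LindemannTheorem : Prop :=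
  ∀ (n : ℕ) (α c : Fin n → ℂ), Function.Injective α →
    (∀ i, IsAlgebraic ℚ (α i)) → (∀ i, IsAlgebraic ℚ (c i)) →
    (∑ i, c i * Complex.exp (α i)) = 0 → ∀ i, c i = 0

theorem Complex.transcendental_cos_of_lindemann (lindemann : LindemannTheorem) {z : ℂ}
    (hz : IsAlgebraic ℚ z) (hz0 : z ≠ 0) : Transcendental ℚ (Complex.cos z) := by
  intro hcos
  have hzI : IsAlgebraic ℚ (z * I) := hz.mul isIntegral_rat_I.isAlgebraic
  have hinj : Function.Injective ![z * I, -(z * I), 0] := by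
    have hzI0 : z * I ≠ 0 := mul_ne_zero hz0 I_ne_zero
    have hzI_ne_neg : z * I ≠ -(z * I) := fun h => hzI0 (CharZero.eq_neg_self_iff.mp h)
    intro i j hij
    fin_cases i <;> fin_cases j <;> simp_all [hzI_ne_neg.symm, hzI0.symm]
  have halg_exps : ∀ i, IsAlgebraic ℚ (![z * I, -(z * I), 0] i) := by
    intro i
    fin_cases i
    exacts [hzI, hzI.neg, isAlgebraic_zero]
  have halg_coeffs : ∀ i, IsAlgebraic ℚ (![1, 1, -(2 * cos z)] i) := by
    intro i
    fin_cases i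
    exacts [isAlgebraic_one, isAlgebraic_one, ((isAlgebraic_algebraMap (2 : ℚ)).mul hcos).neg]
  have hsum : ∑ i, ![1, 1, -(2 * cos z)] i * exp (![z * I, -(z * I), 0] i) = 0 := by
    simp only [Fin.sum_univ_three, Matrix.cons_val_zero, Matrix.cons_val_one,
      Matrix.cons_val_two, Matrix.head_cons, Matrix.tail_cons, exp_zero, cos, neg_mul]
    ring
  exact one_ne_zero (lindemann 3 _ _ hinj halg_exps halg_coeffs hsum 0)

theorem Real.transcendental_cos_of_lindemann (lindemann : LindemannTheorem) {x : ℝ}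
    (hx : IsAlgebraic ℚ x) (hx0 : x ≠ 0) : Transcendental ℚ (cos x) := by
  rw [← transcendental_algebraMap_iff (A := ℂ) RCLike.ofReal_injective]
  rw [← isAlgebraic_algebraMap_iff (A := ℂ) RCLike.ofReal_injective] at hx
  simpa using Complex.transcendental_cos_of_lindemann lindemann hx (by simpa using hx0)

theorem Real.isAlgebraic_rat_cos_rat_mul_pi (q : ℚ) : IsAlgebraic ℚ (cos (q * π)) :=
  (isAlgebraic_cos_rat_mul_pi q).extendScalars (algebraMap ℤ ℚ).injective_int

theorem Real.isAlgebraic_rat_sin_rat_mul_pi (q : ℚ) : IsAlgebraic ℚ (sin (q * π)) :=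
  (isAlgebraic_sin_rat_mul_pi q).extendScalars (algebraMap ℤ ℚ).injective_int

theorem transcendental_of_slc2_general
    (lindemann : ∀ (n : ℕ) (α c : Fin n → ℂ), Function.Injective α →
      (∀ i, IsAlgebraic ℚ (α i)) → (∀ i, IsAlgebraic ℚ (c i)) →
      (∑ i, c i * Complex.exp (α i)) = 0 → ∀ i, c i = 0)
    (α β γ c : ℝ) (hc : 0 < c)
    (hαQ : ∃ q : ℚ, α = (q : ℝ) * π) (hβQ : ∃ q : ℚ, β = (q : ℝ) * π)
    (hγQ : ∃ q : ℚ, γ = (q : ℝ) * π)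
    (hrel : Real.cos c = (Real.cos α * Real.cos β + Real.cos γ) / (Real.sin α * Real.sin β)) :
    Transcendental ℚ c := by
  intro hcalg
  obtain ⟨a, rfl⟩ := hαQ
  obtain ⟨b, rfl⟩ := hβQ
  obtain ⟨g, rfl⟩ := hγQ
  have hcos : IsAlgebraic ℚ (Real.cos c) := by
    rw [hrel, div_eq_mul_inv]
    exact (((isAlgebraic_rat_cos_rat_mul_pi a).mul (isAlgebraic_rat_cos_rat_mul_pi b)).add
      (isAlgebraic_rat_cos_rat_mul_pi g)).mul
      ((isAlgebraic_rat_sin_rat_mul_pi a).mul (isAlgebraic_rat_sin_rat_mul_pi b)).inv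
  exact Real.transcendental_cos_of_lindemann lindemann hcalg hc.ne' hcos

theorem transcendental_of_slc2
    (lindemann : ∀ (n : ℕ) (α c : Fin n → ℂ), Function.Injective α →
      (∀ i, IsAlgebraic ℚ (α i)) → (∀ i, IsAlgebraic ℚ (c i)) →
      (∑ i, c i * Complex.exp (α i)) = 0 → ∀ i, c i = 0)
    (α β γ c : ℝ) (hc : 0 < c)
    (hαQ : ∃ q : ℚ, α = (q : ℝ) * π) (hβQ : ∃ q : ℚ, β = (q : ℝ) * π)
    (hγQ : ∃ q : ℚ, γ = (q : ℝ) * π)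
    (hsin : Real.sin α * Real.sin β ≠ 0)
    (hrel : Real.cos c = (Real.cos α * Real.cos β + Real.cos γ) / (Real.sin α * Real.sin β)) :
    Transcendental ℚ c :=
  transcendental_of_slc2_general lindemann α β γ c hc hαQ hβQ hγQ hrel
end

section
/- If c > 0 and cos c is a nonzero algebraic number, then c is transcendental. -/
theorem transcendental_of_cos_algebraic_ne_zero
    (lindemann : ∀ (n : ℕ) (α c : Fin n → ℂ), Function.Injective α →
      (∀ i, IsAlgebraic ℚ (α i)) → (∀ i, IsAlgebraic ℚ (c i)) →
      (∑ i, c i * Complex.exp (α i)) = 0 → ∀ i, c i = 0)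
    (c : ℝ) (hc : 0 < c) (hne : Real.cos c ≠ 0) (halg : IsAlgebraic ℚ (Real.cos c)) :
    Transcendental ℚ c := by
  intro halg_c
  have hcC : IsAlgebraic ℚ (c : ℂ) :=
    halg_c.algHom (AlgHom.restrictScalars ℚ Complex.ofRealAm)
  have hcosC : IsAlgebraic ℚ ((Real.cos c : ℂ)) :=
    halg.algHom (AlgHom.restrictScalars ℚ Complex.ofRealAm)
  have hI : IsAlgebraic ℚ Complex.I :=
    ⟨Polynomial.X ^ 2 + 1, by
      intro h
      have := congrArg (Polynomial.coeff · 0) h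
      simp at this, by simp⟩
  have hcne : (c : ℂ) ≠ 0 := by exact_mod_cast hc.ne'
  set a : ℂ := Complex.I * c with ha
  have hane : a ≠ 0 := mul_ne_zero Complex.I_ne_zero hcne
  have h2 : a ≠ -a := by
    intro h
    apply hane
    linear_combination h / 2
  set α : Fin 3 → ℂ := ![a, -a, 0] with hα
  set co : Fin 3 → ℂ := ![1, 1, -2 * Real.cos c] with hco
  have hinj : Function.Injective α := by
    intro i j hij
    fin_cases i <;> fin_cases j <;> simp_all [α] <;>
      first
      | rfl
      | exact absurd hij h2
      | exact absurd hij.symm h2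
      | exact absurd hij hane
      | exact absurd hij.symm hane
      | exact absurd (neg_eq_zero.mp hij) hane
      | exact absurd (neg_eq_zero.mp hij.symm) hane
  have hαalg : ∀ i, IsAlgebraic ℚ (α i) := by
    intro i
    have hIc : IsAlgebraic ℚ a := by
      rw [isAlgebraic_iff_isIntegral] at hI hcC ⊢
      exact hI.mul hcC
    have hIcn : IsAlgebraic ℚ (-a) := by
      rw [isAlgebraic_iff_isIntegral] at hIc ⊢
      exact hIc.neg
    fin_cases i <;> simp [α]
    · exact hIc
    · exact hIcn
    · exact isAlgebraic_zero
  have hcoalg : ∀ i, IsAlgebraic ℚ (co i) := by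
    intro i
    have h2c : IsAlgebraic ℚ (-2 * (Real.cos c : ℂ)) := by
      rw [isAlgebraic_iff_isIntegral] at hcosC ⊢
      have := (isIntegral_algebraMap (R := ℚ) (A := ℂ) (x := (-2:ℚ))).mul hcosC
      have he : (algebraMap ℚ ℂ) (-2) * (Real.cos c : ℂ) = -2 * (Real.cos c : ℂ) := by
        push_cast [mul_comm]
        norm_num
      rwa [he] at this
    fin_cases i <;> simp [co]
    · exact isAlgebraic_one
    · exact isAlgebraic_one
    · simpa [neg_mul] using h2c
  have hsum : (∑ i, co i * Complex.exp (α i)) = 0 := by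
    have hcos : (Real.cos c : ℂ) = Complex.cos c := Complex.ofReal_cos c
    rw [Fin.sum_univ_three]
    simp only [α, co, Matrix.cons_val_zero, Matrix.cons_val_one, Matrix.head_cons,
      Matrix.cons_val_two, Matrix.tail_cons]
    rw [hcos, Complex.cos, ha, Complex.exp_zero]
    ring_nf
  have := lindemann 3 α co hinj hαalg hcoalg hsum 0
  simp [co] at this
end

section
/- In Euclidean geometry, the number of similarity types of triangles with all angles rational multiples of π admitting a representative whose side lengths each have degree at most d over ℚ is finite for every positive integer d. -/
/-!
By the law of cosines the cosines of the angles lie in `ℚ(a, b, c)`, a field of degree at most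
`d³`. If `θ = 2πr` with `r` of denominator `n`, then `exp(iθ)` is a primitive `n`-th root of unity,
of degree `φ(n)`, and it is quadratic over `ℚ(cos θ)`; so `φ(n) ≤ 2d³`, and `n ≤ 2φ(n)²` leaves
finitely many denominators, hence finitely many angles in `(0, π)`.
-/

open Real Polynomial IntermediateField Module
open scoped Nat

namespace Nat

theorem le_totient_sq_of_odd {n : ℕ} (hn : Odd n) : n ≤ φ n ^ 2 := by
  induction n using Nat.recOnPosPrimePosCoprime with
  | zero => simp at hn
  | one => simp
  | prime_pow p k hp hk =>
    obtain ⟨j, rfl⟩ := Nat.exists_eq_add_of_lt hk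
    have hp3 : 3 ≤ p := by
      have : p ≠ 2 := by rintro rfl; simp [Nat.odd_iff] at hn
      have := hp.two_le
      omega
    have hp_le : p ≤ (p - 1) ^ 2 := by
      obtain ⟨m, rfl⟩ := Nat.exists_eq_add_of_le hp3
      rw [show 3 + m - 1 = m + 2 by omega]
      nlinarith
    rw [zero_add, totient_prime_pow_succ hp, pow_succ, mul_pow]
    exact Nat.mul_le_mul (le_self_pow two_ne_zero _) hp_le
  | coprime a b _ _ hab iha ihb =>
    rw [totient_mul hab, mul_pow]
    exact Nat.mul_le_mul (iha (Nat.Odd.of_mul_left hn)) (ihb (Nat.Odd.of_mul_right hn))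

theorem le_two_mul_totient_sq (n : ℕ) : n ≤ 2 * φ n ^ 2 := by
  rcases n.eq_zero_or_pos with rfl | hn
  · simp
  obtain ⟨k, m, hm, rfl⟩ := exists_eq_two_pow_mul_odd hn.ne'
  rcases k with _ | k
  · simpa using (le_totient_sq_of_odd hm).trans (Nat.le_mul_of_pos_left _ two_pos)
  rw [totient_mul ((coprime_two_left.mpr hm).pow_left _), totient_prime_pow_succ prime_two,
    Nat.add_one_sub_one, mul_one, mul_pow, ← mul_assoc, pow_succ']
  exact Nat.mul_le_mul (Nat.mul_le_mul_left 2 (le_self_pow two_ne_zero _)) (le_totient_sq_of_odd hm)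

end Nat

theorem Rat.finite_setOf_abs_le_one_den_le (N : ℕ) : {r : ℚ | |r| ≤ 1 ∧ r.den ≤ N}.Finite := by
  refine (((Set.finite_Icc (-N : ℤ) N).prod (Set.finite_Iic N)).preimage
    (f := fun r : ℚ ↦ (r.num, r.den)) fun r _ s _ h ↦ Rat.ext (congrArg Prod.fst h)
      (congrArg Prod.snd h)).subset ?_
  rintro r ⟨hr, hden⟩
  have hnum : |(r.num : ℚ)| ≤ N := by
    rw [← Rat.mul_den_eq_num, abs_mul, Nat.abs_cast]
    calc |r| * r.den ≤ 1 * r.den := by gcongr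
      _ ≤ N := by rw [one_mul]; exact_mod_cast hden
  exact ⟨abs_le.mp (by exact_mod_cast hnum), hden⟩

section Degree

variable {F E : Type*} [Field F] [Field E] [Algebra F E]

theorem IntermediateField.natDegree_minpoly_le_finrank {K : IntermediateField F E}
    [FiniteDimensional F K] {x : E} (hx : x ∈ K) : (minpoly F x).natDegree ≤ finrank F K := by
  simpa only [minpoly_eq] using minpoly.natDegree_le (A := F) (⟨x, hx⟩ : K)

theorem natDegree_minpoly_le_mul_of_aeval_eq_zero {x y : E} (hx : IsIntegral F x)
    {p : F⟮x⟯[X]} (hp : p.Monic) (hpy : aeval y p = 0) :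
    (minpoly F y).natDegree ≤ (minpoly F x).natDegree * p.natDegree := by
  have hy : IsIntegral F⟮x⟯ y := ⟨p, hp, hpy⟩
  have := adjoin.finiteDimensional hx
  have := adjoin.finiteDimensional hy
  -- without this instance, synthesis times out on the tower `F⟮x⟯⟮y⟯`
  have : Module.Free F⟮x⟯ F⟮x⟯⟮y⟯ := Module.Free.of_divisionRing _ _
  have : FiniteDimensional F (F⟮x⟯⟮y⟯.restrictScalars F) := FiniteDimensional.trans F F⟮x⟯ F⟮x⟯⟮y⟯
  calc (minpoly F y).natDegree ≤ finrank F (F⟮x⟯⟮y⟯.restrictScalars F) :=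
        natDegree_minpoly_le_finrank (mem_adjoin_simple_self F⟮x⟯ y)
    _ = finrank F F⟮x⟯ * finrank F⟮x⟯ F⟮x⟯⟮y⟯ := (Module.finrank_mul_finrank F F⟮x⟯ F⟮x⟯⟮y⟯).symm
    _ ≤ (minpoly F x).natDegree * p.natDegree := by
        rw [adjoin.finrank hx, adjoin.finrank hy]
        exact Nat.mul_le_mul_left _ (natDegree_le_natDegree (minpoly.min _ _ hp hpy))

end Degree

namespace Real

theorem isIntegral_cos_rat_mul_pi (q : ℚ) : IsIntegral ℚ (cos (q * π)) :=
  ((isAlgebraic_cos_rat_mul_pi q).extendScalars (IsFractionRing.injective ℤ ℚ)).isIntegral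

theorem totient_den_le_two_mul_natDegree_minpoly_cos (q : ℚ) :
    φ q.den ≤ 2 * (minpoly ℚ (cos (2 * π * q))).natDegree := by
  set c := cos (2 * π * q)
  set ζ := Complex.exp (2 * π * Complex.I * q)
  have hc : IsIntegral ℚ (c : ℂ) := by
    have := isIntegral_cos_rat_mul_pi (2 * q)
    rw [Rat.cast_mul, Rat.cast_ofNat, show 2 * (q : ℝ) * π = 2 * π * q by ring] at this
    exact this.map (IsScalarTower.toAlgHom ℚ ℝ ℂ)
  -- `exp(2πiq)` is a root of `X² - 2 cos(2πq) X + 1`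
  let cK : ℚ⟮(c : ℂ)⟯ := ⟨c, mem_adjoin_simple_self ℚ _⟩
  have hquad : aeval ζ (X ^ 2 - C (2 * cK) * X + 1) = 0 := by
    simp only [map_add, map_sub, map_mul, map_pow, aeval_X, aeval_C, map_one, map_ofNat]
    change ζ ^ 2 - 2 * (c : ℂ) * ζ + 1 = 0
    rw [Complex.ofReal_cos, Complex.cos, neg_mul, Complex.exp_neg,
      show ((2 * π * q : ℝ) : ℂ) * Complex.I = 2 * π * Complex.I * q by push_cast; ring]
    field_simp
    ring
  calc φ q.den = (minpoly ℚ ζ).natDegree := by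
        rw [← cyclotomic_eq_minpoly_rat (Complex.isPrimitiveRoot_exp_rat q) q.den_pos,
          natDegree_cyclotomic]
    _ ≤ (minpoly ℚ (c : ℂ)).natDegree * 2 :=
        (natDegree_minpoly_le_mul_of_aeval_eq_zero hc (by monicity!) hquad).trans_eq
          (by congr 1; compute_degree!)
    _ = 2 * (minpoly ℚ c).natDegree := by
        rw [mul_comm, ← minpoly.algebraMap_eq (algebraMap ℝ ℂ).injective]; rfl

theorem finite_setOf_rat_mul_pi_natDegree_minpoly_cos_le (D : ℕ) :
    {θ : ℝ | θ ∈ Set.Ioo 0 π ∧ (∃ q : ℚ, θ = q * π) ∧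
      (minpoly ℚ (cos θ)).natDegree ≤ D}.Finite := by
  refine ((Rat.finite_setOf_abs_le_one_den_le (2 * (2 * D) ^ 2)).image
    fun r : ℚ ↦ 2 * π * r).subset ?_
  rintro θ ⟨⟨hθ0, hθπ⟩, ⟨q, rfl⟩, hdeg⟩
  refine ⟨q / 2, ⟨?_, ?_⟩, by push_cast; ring⟩
  · have hq0 : 0 < q := by exact_mod_cast pos_of_mul_pos_left hθ0 pi_pos.le
    have hq1 : q < 1 := by exact_mod_cast (mul_lt_iff_lt_one_left pi_pos).mp hθπ
    rw [abs_le]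
    constructor <;> linarith
  · have h := totient_den_le_two_mul_natDegree_minpoly_cos (q / 2)
    rw [show 2 * π * ((q / 2 : ℚ) : ℝ) = q * π by push_cast; ring] at h
    calc (q / 2).den ≤ 2 * φ (q / 2).den ^ 2 := Nat.le_two_mul_totient_sq _
      _ ≤ 2 * (2 * D) ^ 2 := by gcongr; omega

end Real

theorem mem_of_law_of_cosines {K S : Type*} [Field K] [NeZero (2 : K)] [SetLike S K]
    [SubfieldClass S K] {E : S} {a b c x : K} (ha : a ≠ 0) (hb : b ≠ 0) (haE : a ∈ E)
    (hbE : b ∈ E) (hcE : c ∈ E) (h : c ^ 2 = a ^ 2 + b ^ 2 - 2 * a * b * x) : x ∈ E := by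
  have hx : x = (a ^ 2 + b ^ 2 - c ^ 2) / (2 * a * b) := by
    field_simp
    linear_combination h
  rw [hx]
  exact div_mem (sub_mem (add_mem (pow_mem haE 2) (pow_mem hbE 2)) (pow_mem hcE 2))
    (mul_mem (mul_mem (ofNat_mem E 2) haE) hbE)

theorem finitely_many_rational_angled_similarity_types_general (d : ℕ) :
    Set.Finite {s : Multiset ℝ | ∃ α β γ a b c : ℝ,
      s = {α, β, γ} ∧
      α ∈ Set.Ioo 0 π ∧ β ∈ Set.Ioo 0 π ∧ γ ∈ Set.Ioo 0 π ∧
      α + β + γ = π ∧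
      (∃ q : ℚ, α = (q : ℝ) * π) ∧ (∃ q : ℚ, β = (q : ℝ) * π) ∧
      (∃ q : ℚ, γ = (q : ℝ) * π) ∧
      0 < a ∧ 0 < b ∧ 0 < c ∧
      c ^ 2 = a ^ 2 + b ^ 2 - 2 * a * b * Real.cos γ ∧
      a ^ 2 = b ^ 2 + c ^ 2 - 2 * b * c * Real.cos α ∧
      b ^ 2 = c ^ 2 + a ^ 2 - 2 * c * a * Real.cos β ∧
      IsAlgebraic ℚ a ∧ IsAlgebraic ℚ b ∧ IsAlgebraic ℚ c ∧
      (minpoly ℚ a).natDegree ≤ d ∧ (minpoly ℚ b).natDegree ≤ d ∧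
      (minpoly ℚ c).natDegree ≤ d} := by
  have hA := finite_setOf_rat_mul_pi_natDegree_minpoly_cos_le (d * d * d)
  refine ((hA.prod (hA.prod hA)).image
    fun p : ℝ × ℝ × ℝ ↦ ({p.1, p.2.1, p.2.2} : Multiset ℝ)).subset ?_
  rintro s ⟨α, β, γ, a, b, c, rfl, hα, hβ, hγ, -, hqα, hqβ, hqγ, ha, hb, hc, hlγ, hlα, hlβ,
    haa, hba, hca, hda, hdb, hdc⟩
  have := adjoin.finiteDimensional haa.isIntegral
  have := adjoin.finiteDimensional hba.isIntegral
  have := adjoin.finiteDimensional hca.isIntegral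
  let E := ℚ⟮a⟯ ⊔ ℚ⟮b⟯ ⊔ ℚ⟮c⟯
  have hE : finrank ℚ E ≤ d * d * d := by
    refine (finrank_sup_le _ _).trans ((Nat.mul_le_mul_right _ (finrank_sup_le _ _)).trans ?_)
    rw [adjoin.finrank haa.isIntegral, adjoin.finrank hba.isIntegral,
      adjoin.finrank hca.isIntegral]
    gcongr
  have haE : a ∈ E := (le_sup_left.trans le_sup_left : ℚ⟮a⟯ ≤ E) (mem_adjoin_simple_self ℚ a)
  have hbE : b ∈ E := (le_sup_right.trans le_sup_left : ℚ⟮b⟯ ≤ E) (mem_adjoin_simple_self ℚ b)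
  have hcE : c ∈ E := (le_sup_right : ℚ⟮c⟯ ≤ E) (mem_adjoin_simple_self ℚ c)
  have hdeg {x : ℝ} (hx : x ∈ E) : (minpoly ℚ x).natDegree ≤ d * d * d :=
    (natDegree_minpoly_le_finrank hx).trans hE
  exact ⟨(α, β, γ),
    ⟨⟨hα, hqα, hdeg (mem_of_law_of_cosines hb.ne' hc.ne' hbE hcE haE hlα)⟩,
      ⟨hβ, hqβ, hdeg (mem_of_law_of_cosines hc.ne' ha.ne' hcE haE hbE hlβ)⟩,
      ⟨hγ, hqγ, hdeg (mem_of_law_of_cosines ha.ne' hb.ne' haE hbE hcE hlγ)⟩⟩, rfl⟩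

/-- For each positive integer d, there are only finitely many similarity types
(multisets of angles) of rational angled Euclidean triangles admitting a representative
whose side lengths each have degree at most d over ℚ. -/
theorem finitely_many_rational_angled_similarity_types (d : ℕ) (hd : 0 < d) :
    Set.Finite {s : Multiset ℝ | ∃ α β γ a b c : ℝ,
      s = {α, β, γ} ∧
      α ∈ Set.Ioo 0 π ∧ β ∈ Set.Ioo 0 π ∧ γ ∈ Set.Ioo 0 π ∧
      α + β + γ = π ∧
      (∃ q : ℚ, α = (q : ℝ) * π) ∧ (∃ q : ℚ, β = (q : ℝ) * π) ∧
      (∃ q : ℚ, γ = (q : ℝ) * π) ∧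
      0 < a ∧ 0 < b ∧ 0 < c ∧
      c ^ 2 = a ^ 2 + b ^ 2 - 2 * a * b * Real.cos γ ∧
      a ^ 2 = b ^ 2 + c ^ 2 - 2 * b * c * Real.cos α ∧
      b ^ 2 = c ^ 2 + a ^ 2 - 2 * c * a * Real.cos β ∧
      IsAlgebraic ℚ a ∧ IsAlgebraic ℚ b ∧ IsAlgebraic ℚ c ∧
      (minpoly ℚ a).natDegree ≤ d ∧ (minpoly ℚ b).natDegree ≤ d ∧
      (minpoly ℚ c).natDegree ≤ d} :=
  finitely_many_rational_angled_similarity_types_general d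
end
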